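/- arXiv:1010.1303 — 4 statements merged into one kernel-verified Lean document; each statement's English description precedes it below -/
import Mathlib

section
/- For finite random variables X, X̃, X̂, Y with joint distribution V, the minimum of I(X̂ ∧ X X̃ Y) over all joint distributions V_{X X̃ X̂ Y} whose (X, X̂, Y)-marginal equals the given (X, X̃, Y)-marginal V_{X X̃ Y} is exactly I(X̃ ∧ X Y), where I denotes Shannon mutual information. -/
open Finset Real

/-- Shannon entropy (in bits) of a distribution on a finite type. -/
noncomputable def ent {α : Type*} [Fintype α] (p : α → ℝ) : ℝ :=
  - ∑ a, p a * Real.logb 2 (p a)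

/-- Mutual information `I(A ∧ B)` of a joint distribution on `α × β` (in bits). -/
noncomputable def mi {α β : Type*} [Fintype α] [Fintype β] (p : α × β → ℝ) : ℝ :=
  ent (fun a => ∑ b, p (a, b)) + ent (fun b => ∑ a, p (a, b)) - ent p

lemma mi_repr {α β : Type*} [Fintype α] [Fintype β] (p : α × β → ℝ) (hp : ∀ t, 0 ≤ p t) :
    mi p = ∑ t, p t * Real.logb 2 (p t / ((∑ b, p (t.1, b)) * (∑ a, p (a, t.2)))) := by
  have hA : ∀ t : α × β, p t ≠ 0 → 0 < ∑ b, p (t.1, b) := by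
    intro t ht
    refine lt_of_lt_of_le ((hp t).lt_of_ne (Ne.symm ht)) ?_
    have := Finset.single_le_sum (f := fun b => p (t.1, b))
      (fun i _ => hp _) (Finset.mem_univ t.2)
    simpa using this
  have hB : ∀ t : α × β, p t ≠ 0 → 0 < ∑ a, p (a, t.2) := by
    intro t ht
    refine lt_of_lt_of_le ((hp t).lt_of_ne (Ne.symm ht)) ?_
    have := Finset.single_le_sum (f := fun a => p (a, t.2))
      (fun i _ => hp _) (Finset.mem_univ t.1)
    simpa using this
  have h1 : ∑ a, (∑ b, p (a, b)) * Real.logb 2 (∑ b, p (a, b))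
      = ∑ t : α × β, p t * Real.logb 2 (∑ b, p (t.1, b)) := by
    rw [Fintype.sum_prod_type]
    exact Finset.sum_congr rfl fun a _ => by rw [Finset.sum_mul]
  have h2 : ∑ b, (∑ a, p (a, b)) * Real.logb 2 (∑ a, p (a, b))
      = ∑ t : α × β, p t * Real.logb 2 (∑ a, p (a, t.2)) := by
    rw [Fintype.sum_prod_type_right]
    exact Finset.sum_congr rfl fun b _ => by rw [Finset.sum_mul]
  simp only [mi, ent, h1, h2]
  have key : ∀ t : α × β, p t * Real.logb 2 (p t / ((∑ b, p (t.1, b)) * ∑ a, p (a, t.2)))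
      = p t * Real.logb 2 (p t) - p t * Real.logb 2 (∑ b, p (t.1, b))
        - p t * Real.logb 2 (∑ a, p (a, t.2)) := by
    intro t
    by_cases ht : p t = 0
    · simp [ht]
    · rw [Real.logb_div ht (mul_ne_zero (hA t ht).ne' (hB t ht).ne'),
        Real.logb_mul (hA t ht).ne' (hB t ht).ne']
      ring
  rw [Finset.sum_congr rfl (fun t _ => key t), Finset.sum_sub_distrib, Finset.sum_sub_distrib]
  ring

lemma sum_swap4 {α β₁ β₂ β₃ : Type*} [Fintype α] [Fintype β₁] [Fintype β₂] [Fintype β₃]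
    (f : α → β₁ → β₂ → β₃ → ℝ) :
    ∑ a, ∑ b1, ∑ b2, ∑ b3, f a b1 b2 b3 = ∑ b1, ∑ b3, ∑ a, ∑ b2, f a b1 b2 b3 := by
  rw [Finset.sum_comm]
  refine Finset.sum_congr rfl fun b1 _ => ?_
  have h1 : ∑ a, ∑ b2, ∑ b3, f a b1 b2 b3 = ∑ a, ∑ b3, ∑ b2, f a b1 b2 b3 :=
    Finset.sum_congr rfl fun a _ => Finset.sum_comm
  rw [h1]
  exact Finset.sum_comm

lemma dpi {α β₁ β₂ β₃ : Type*} [Fintype α] [Fintype β₁] [Fintype β₂] [Fintype β₃]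
    (q : α × β₁ × β₂ × β₃ → ℝ) (hq : ∀ t, 0 ≤ q t) :
    mi (fun t : α × β₁ × β₃ => ∑ b2, q (t.1, t.2.1, b2, t.2.2)) ≤ mi q := by
  classical
  set m : α × β₁ × β₃ → ℝ := fun t => ∑ b2, q (t.1, t.2.1, b2, t.2.2) with hm
  set qA : α → ℝ := fun a => ∑ b : β₁ × β₂ × β₃, q (a, b) with hqA
  set qB : β₁ × β₂ × β₃ → ℝ := fun b => ∑ a, q (a, b) with hqB
  set mB : β₁ × β₃ → ℝ := fun c => ∑ b2, qB (c.1, b2, c.2) with hmB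
  have hm0 : ∀ t, 0 ≤ m t := fun t => Finset.sum_nonneg fun _ _ => hq _
  have hqB0 : ∀ b, 0 ≤ qB b := fun b => Finset.sum_nonneg fun _ _ => hq _
  have hmB0 : ∀ c, 0 ≤ mB c := fun c => Finset.sum_nonneg fun _ _ => hqB0 _
  have hmA : ∀ a, ∑ c : β₁ × β₃, m (a, c) = qA a := by
    intro a
    simp only [hm, hqA, Fintype.sum_prod_type]
    exact Finset.sum_congr rfl fun b1 _ => Finset.sum_comm
  have hmBa : ∀ c : β₁ × β₃, ∑ a, m (a, c) = mB c := by
    intro c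
    simp only [hm, hmB, hqB]
    exact Finset.sum_comm
  have hmiq : mi q = ∑ t : α × β₁ × β₂ × β₃,
      q t * Real.logb 2 (q t / (qA t.1 * qB t.2)) := mi_repr q hq
  have hmim : mi m = ∑ t : α × β₁ × β₂ × β₃,
      q t * Real.logb 2 (m (t.1, (t.2.1, t.2.2.2)) / (qA t.1 * mB (t.2.1, t.2.2.2))) := by
    rw [mi_repr m hm0]
    have step1 : ∀ t : α × β₁ × β₃,
        m t * Real.logb 2 (m t / ((∑ b, m (t.1, b)) * ∑ a, m (a, t.2)))
        = ∑ b2, q (t.1, t.2.1, b2, t.2.2) *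
            Real.logb 2 (m t / (qA t.1 * mB t.2)) := by
      intro t
      rw [hmA, hmBa, ← Finset.sum_mul]
    rw [Finset.sum_congr rfl fun t _ => step1 t]
    simp only [Fintype.sum_prod_type]
    exact Finset.sum_congr rfl fun a _ => Finset.sum_congr rfl fun b1 _ => Finset.sum_comm
  set r : α × β₁ × β₂ × β₃ → ℝ := fun t =>
    if mB (t.2.1, t.2.2.2) = 0 then 0
    else qB t.2 * m (t.1, (t.2.1, t.2.2.2)) / mB (t.2.1, t.2.2.2) with hr
  have hr0 : ∀ t, 0 ≤ r t := by
    intro t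
    show (0:ℝ) ≤ if mB (t.2.1, t.2.2.2) = 0 then 0
      else qB t.2 * m (t.1, t.2.1, t.2.2.2) / mB (t.2.1, t.2.2.2)
    split
    · exact le_refl 0
    · exact div_nonneg (mul_nonneg (hqB0 _) (hm0 _)) (hmB0 _)
  have hkey : ∀ b1 b3, ∑ a, ∑ b2, r (a, b1, b2, b3)
      = if mB (b1, b3) = 0 then 0 else mB (b1, b3) := by
    intro b1 b3
    by_cases h : mB (b1, b3) = 0
    · simp [hr, h]
    · rw [if_neg h]
      have inner : ∀ a, ∑ b2, r (a, b1, b2, b3) = m (a, (b1, b3)) := by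
        intro a
        simp only [hr, if_neg h]
        rw [← Finset.sum_div, ← Finset.sum_mul]
        have : (∑ b2, qB (b1, b2, b3)) = mB (b1, b3) := rfl
        rw [this]
        exact mul_div_cancel_left₀ _ h
      rw [Finset.sum_congr rfl fun a _ => inner a]
      exact hmBa (b1, b3)
  have hsum_r : ∑ t : α × β₁ × β₂ × β₃, r t ≤ ∑ t, q t := by
    have e1 : ∑ t : α × β₁ × β₂ × β₃, r t
        = ∑ b1, ∑ b3, ∑ a, ∑ b2, r (a, b1, b2, b3) := by
      simp only [Fintype.sum_prod_type]
      exact sum_swap4 fun a b1 b2 b3 => r (a, b1, b2, b3)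
    have e2 : ∑ t : α × β₁ × β₂ × β₃, q t = ∑ b1, ∑ b3, mB (b1, b3) := by
      simp only [Fintype.sum_prod_type]
      rw [sum_swap4 fun a b1 b2 b3 => q (a, b1, b2, b3)]
      refine Finset.sum_congr rfl fun b1 _ => Finset.sum_congr rfl fun b3 _ => ?_
      have : mB (b1, b3) = ∑ b2, ∑ a, q (a, b1, b2, b3) := rfl
      rw [this]
      exact Finset.sum_comm
    rw [e1, e2]
    refine Finset.sum_le_sum fun b1 _ => Finset.sum_le_sum fun b3 _ => ?_
    rw [hkey b1 b3]
    split
    · next h => rw [h]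
    · exact le_refl _
  have hlog2 : (0:ℝ) < Real.log 2 := Real.log_pos one_lt_two
  have hpt : ∀ t : α × β₁ × β₂ × β₃, (q t - r t) / Real.log 2 ≤
      q t * Real.logb 2 (q t / (qA t.1 * qB t.2))
      - q t * Real.logb 2 (m (t.1, (t.2.1, t.2.2.2)) / (qA t.1 * mB (t.2.1, t.2.2.2))) := by
    intro t
    by_cases ht : q t = 0
    · rw [ht]
      simp only [zero_mul, zero_sub, sub_zero]
      rw [div_le_iff₀ hlog2]
      nlinarith [hr0 t, hlog2.le]
    · have hqt : 0 < q t := (hq t).lt_of_ne (Ne.symm ht)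
      obtain ⟨a, b1, b2, b3⟩ := t
      dsimp only at hqt ⊢
      have hqAp : 0 < qA a := by
        refine lt_of_lt_of_le hqt ?_
        exact Finset.single_le_sum (f := fun b : β₁ × β₂ × β₃ => q (a, b))
          (fun i _ => hq _) (Finset.mem_univ (b1, b2, b3))
      have hqBp : 0 < qB (b1, b2, b3) := by
        refine lt_of_lt_of_le hqt ?_
        exact Finset.single_le_sum (f := fun a' => q (a', b1, b2, b3))
          (fun i _ => hq _) (Finset.mem_univ a)
      have hmp : 0 < m (a, (b1, b3)) := by
        refine lt_of_lt_of_le hqt ?_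
        exact Finset.single_le_sum (f := fun b2' => q (a, b1, b2', b3))
          (fun i _ => hq _) (Finset.mem_univ b2)
      have hmBp : 0 < mB (b1, b3) := by
        refine lt_of_lt_of_le hqBp ?_
        exact Finset.single_le_sum (f := fun b2' => qB (b1, b2', b3))
          (fun i _ => hqB0 _) (Finset.mem_univ b2)
      have hrval : r (a, b1, b2, b3)
          = qB (b1, b2, b3) * m (a, (b1, b3)) / mB (b1, b3) := by
        show (if mB (b1, b3) = 0 then (0:ℝ)
          else qB (b1, b2, b3) * m (a, (b1, b3)) / mB (b1, b3)) = _
        rw [if_neg hmBp.ne']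
      rw [hrval]
      set u : ℝ := q (a, b1, b2, b3) * mB (b1, b3) / (qB (b1, b2, b3) * m (a, (b1, b3))) with hu
      have hup : 0 < u := by positivity
      have hdiff : Real.logb 2 (q (a, b1, b2, b3) / (qA a * qB (b1, b2, b3)))
          - Real.logb 2 (m (a, (b1, b3)) / (qA a * mB (b1, b3)))
          = Real.log u / Real.log 2 := by
        simp only [Real.logb, hu]
        rw [Real.log_div ht (by positivity), Real.log_div hmp.ne' (by positivity),
          Real.log_mul hqAp.ne' hqBp.ne', Real.log_mul hqAp.ne' hmBp.ne',
          Real.log_div (by positivity) (by positivity),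
          Real.log_mul hqt.ne' hmBp.ne', Real.log_mul hqBp.ne' hmp.ne']
        ring
      have hlogu : 1 - u⁻¹ ≤ Real.log u := by
        have := Real.log_le_sub_one_of_pos (inv_pos.mpr hup)
        rw [Real.log_inv] at this
        linarith
      have huinv : q (a, b1, b2, b3) * u⁻¹
          = qB (b1, b2, b3) * m (a, (b1, b3)) / mB (b1, b3) := by
        rw [hu]
        field_simp
      rw [← mul_sub, hdiff]
      have hmain : q (a, b1, b2, b3) - qB (b1, b2, b3) * m (a, (b1, b3)) / mB (b1, b3)
          ≤ q (a, b1, b2, b3) * Real.log u := by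
        have h1 := mul_le_mul_of_nonneg_left hlogu hqt.le
        have h2 : q (a, b1, b2, b3) - qB (b1, b2, b3) * m (a, (b1, b3)) / mB (b1, b3)
            = q (a, b1, b2, b3) * (1 - u⁻¹) := by rw [← huinv]; ring
        linarith
      calc (q (a, b1, b2, b3) - qB (b1, b2, b3) * m (a, (b1, b3)) / mB (b1, b3)) / Real.log 2
          ≤ (q (a, b1, b2, b3) * Real.log u) / Real.log 2 :=
            (div_le_div_iff_of_pos_right hlog2).mpr hmain
        _ = q (a, b1, b2, b3) * (Real.log u / Real.log 2) := by ring
  have final : (∑ t : α × β₁ × β₂ × β₃, q t - ∑ t, r t) / Real.log 2 ≤ mi q - mi m := by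
    rw [hmiq, hmim, ← Finset.sum_sub_distrib, ← Finset.sum_sub_distrib, Finset.sum_div]
    exact Finset.sum_le_sum fun t _ => hpt t
  have : 0 ≤ (∑ t : α × β₁ × β₂ × β₃, q t - ∑ t, r t) / Real.log 2 :=
    div_nonneg (by linarith) hlog2.le
  linarith

/-- The minimum of `I(X̂ ∧ X X̃ Y)` over all joint distributions `q` on
`𝒳 × 𝒳 × 𝒳 × 𝒴` (coordinates `(X, X̃, X̂, Y)`) whose `(X, X̂, Y)`-marginal and
`(X, X̃, Y)`-marginal both equal the given distribution `V = V_{X X̃ Y}` is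
exactly `I_V(X̃ ∧ X Y)`. -/
theorem min_mi_over_extensions {𝒳 𝒴 : Type} [Fintype 𝒳] [Fintype 𝒴]
    (V : 𝒳 × 𝒳 × 𝒴 → ℝ)
    (hV0 : ∀ t, 0 ≤ V t) (hV1 : ∑ t, V t = 1) :
    IsLeast
      { r : ℝ | ∃ q : 𝒳 × 𝒳 × 𝒳 × 𝒴 → ℝ,
          (∀ t, 0 ≤ q t) ∧ (∑ t, q t = 1) ∧
          (∀ x xt y, ∑ xh, q (x, xt, xh, y) = V (x, xt, y)) ∧
          (∀ x xh y, ∑ xt, q (x, xt, xh, y) = V (x, xh, y)) ∧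
          r = mi (fun p : 𝒳 × (𝒳 × 𝒳 × 𝒴) =>
                q (p.2.1, p.2.2.1, p.1, p.2.2.2)) }
      (mi (fun p : 𝒳 × (𝒳 × 𝒴) => V (p.2.1, p.1, p.2.2))) := by
  classical
  constructor
  · -- membership: conditionally independent coupling
    set s : 𝒳 → 𝒴 → ℝ := fun x y => ∑ c, V (x, c, y) with hsdef
    set A : 𝒳 → ℝ := fun c => ∑ x, ∑ y, V (x, c, y) with hAdef
    set q0 : 𝒳 × 𝒳 × 𝒳 × 𝒴 → ℝ := fun t =>
      if s t.1 t.2.2.2 = 0 then 0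
      else V (t.1, t.2.1, t.2.2.2) * V (t.1, t.2.2.1, t.2.2.2) / s t.1 t.2.2.2 with hq0def
    have hs0 : ∀ x y, 0 ≤ s x y := fun x y => Finset.sum_nonneg fun _ _ => hV0 _
    have hVle : ∀ x c y, V (x, c, y) ≤ s x y := fun x c y =>
      Finset.single_le_sum (f := fun c' => V (x, c', y)) (fun _ _ => hV0 _) (Finset.mem_univ c)
    have hszero : ∀ x y, s x y = 0 → ∀ c, V (x, c, y) = 0 := by
      intro x y h c
      have h1 := hVle x c y
      have h2 := hV0 (x, c, y)
      rw [h] at h1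
      linarith
    have hq00 : ∀ t, 0 ≤ q0 t := by
      intro t
      show (0:ℝ) ≤ if s t.1 t.2.2.2 = 0 then 0
        else V (t.1, t.2.1, t.2.2.2) * V (t.1, t.2.2.1, t.2.2.2) / s t.1 t.2.2.2
      split
      · exact le_refl 0
      · exact div_nonneg (mul_nonneg (hV0 _) (hV0 _)) (hs0 _ _)
    have h3 : ∀ x xt y, ∑ xh, q0 (x, xt, xh, y) = V (x, xt, y) := by
      intro x xt y
      by_cases h : s x y = 0
      · have hz : ∀ xh, q0 (x, xt, xh, y) = 0 := fun xh => by
          show (if s x y = 0 then (0:ℝ) else _) = 0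
          rw [if_pos h]
        rw [Finset.sum_congr rfl fun xh _ => hz xh, Finset.sum_const_zero]
        exact (hszero x y h xt).symm
      · have he : ∀ xh, q0 (x, xt, xh, y) = V (x, xt, y) * V (x, xh, y) / s x y := fun xh => by
          show (if s x y = 0 then (0:ℝ) else V (x, xt, y) * V (x, xh, y) / s x y) = _
          rw [if_neg h]
        rw [Finset.sum_congr rfl fun xh _ => he xh, ← Finset.sum_div, ← Finset.mul_sum]
        have hss : ∑ xh, V (x, xh, y) = s x y := rfl
        rw [hss, mul_div_assoc, div_self h, mul_one]
    have h4 : ∀ x xh y, ∑ xt, q0 (x, xt, xh, y) = V (x, xh, y) := by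
      intro x xh y
      by_cases h : s x y = 0
      · have hz : ∀ xt, q0 (x, xt, xh, y) = 0 := fun xt => by
          show (if s x y = 0 then (0:ℝ) else _) = 0
          rw [if_pos h]
        rw [Finset.sum_congr rfl fun xt _ => hz xt, Finset.sum_const_zero]
        exact (hszero x y h xh).symm
      · have he : ∀ xt, q0 (x, xt, xh, y) = V (x, xt, y) * V (x, xh, y) / s x y := fun xt => by
          show (if s x y = 0 then (0:ℝ) else V (x, xt, y) * V (x, xh, y) / s x y) = _
          rw [if_neg h]
        rw [Finset.sum_congr rfl fun xt _ => he xt, ← Finset.sum_div, ← Finset.sum_mul]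
        have hss : ∑ xt, V (x, xt, y) = s x y := rfl
        rw [hss, mul_comm, mul_div_assoc, div_self h, mul_one]
    have hq0sum : ∑ t, q0 t = 1 := by
      have e : ∑ t : 𝒳 × 𝒳 × 𝒳 × 𝒴, q0 t = ∑ x, ∑ xt, ∑ y, ∑ xh, q0 (x, xt, xh, y) := by
        simp only [Fintype.sum_prod_type]
        exact Finset.sum_congr rfl fun x _ => Finset.sum_congr rfl fun xt _ => Finset.sum_comm
      rw [e]
      have e2 : ∀ x xt, ∑ y, ∑ xh, q0 (x, xt, xh, y) = ∑ y, V (x, xt, y) :=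
        fun x xt => Finset.sum_congr rfl fun y _ => h3 x xt y
      rw [Finset.sum_congr rfl fun x _ => Finset.sum_congr rfl fun xt _ => e2 x xt, ← hV1]
      simp only [Fintype.sum_prod_type]
    refine ⟨q0, hq00, hq0sum, h3, h4, ?_⟩
    have hm1 : ∀ xh, ∑ b : 𝒳 × 𝒳 × 𝒴, q0 (b.1, b.2.1, xh, b.2.2) = A xh := by
      intro xh
      simp only [Fintype.sum_prod_type]
      refine Finset.sum_congr rfl fun x _ => ?_
      rw [Finset.sum_comm]
      exact Finset.sum_congr rfl fun y _ => h4 x xh y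
    have hrepr1 : mi (fun p : 𝒳 × (𝒳 × 𝒳 × 𝒴) => q0 (p.2.1, p.2.2.1, p.1, p.2.2.2))
        = ∑ xh, ∑ x, ∑ y, V (x, xh, y) * Real.logb 2 (V (x, xh, y) / (s x y * A xh)) := by
      rw [mi_repr _ (fun t => hq00 _)]
      have term : ∀ t : 𝒳 × (𝒳 × 𝒳 × 𝒴),
          q0 (t.2.1, t.2.2.1, t.1, t.2.2.2) *
            Real.logb 2 (q0 (t.2.1, t.2.2.1, t.1, t.2.2.2) /
              ((∑ b : 𝒳 × 𝒳 × 𝒴, q0 (b.1, b.2.1, t.1, b.2.2)) *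
               (∑ a, q0 (t.2.1, t.2.2.1, a, t.2.2.2))))
          = q0 (t.2.1, t.2.2.1, t.1, t.2.2.2) *
            Real.logb 2 (V (t.2.1, t.1, t.2.2.2) / (s t.2.1 t.2.2.2 * A t.1)) := by
        rintro ⟨xh, x, xt, y⟩
        dsimp only
        rw [hm1 xh, h3 x xt y]
        by_cases hz : q0 (x, xt, xh, y) = 0
        · rw [hz, zero_mul, zero_mul]
        · have hsne : s x y ≠ 0 := by
            intro h
            apply hz
            show (if s x y = 0 then (0:ℝ) else _) = 0
            rw [if_pos h]
          have hq0val : q0 (x, xt, xh, y) = V (x, xt, y) * V (x, xh, y) / s x y := by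
            show (if s x y = 0 then (0:ℝ) else _) = _
            rw [if_neg hsne]
          have hVxt : V (x, xt, y) ≠ 0 := by
            intro h
            apply hz
            rw [hq0val, h, zero_mul, zero_div]
          have hVxh : V (x, xh, y) ≠ 0 := by
            intro h
            apply hz
            rw [hq0val, h, mul_zero, zero_div]
          have hAxh : A xh ≠ 0 := by
            have h1 : V (x, xh, y) ≤ ∑ y', V (x, xh, y') :=
              Finset.single_le_sum (f := fun y' => V (x, xh, y'))
                (fun _ _ => hV0 _) (Finset.mem_univ y)
            have h2 : ∑ y', V (x, xh, y') ≤ A xh :=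
              Finset.single_le_sum (f := fun x' => ∑ y', V (x', xh, y'))
                (fun _ _ => Finset.sum_nonneg fun _ _ => hV0 _) (Finset.mem_univ x)
            have := (hV0 (x, xh, y)).lt_of_ne (Ne.symm hVxh)
            linarith
          have harg : V (x, xt, y) * V (x, xh, y) / s x y / (A xh * V (x, xt, y))
              = V (x, xh, y) / (s x y * A xh) := by
            field_simp
          rw [hq0val, harg]
      rw [Finset.sum_congr rfl fun t _ => term t]
      simp only [Fintype.sum_prod_type]
      refine Finset.sum_congr rfl fun xh _ => Finset.sum_congr rfl fun x _ => ?_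
      rw [Finset.sum_comm]
      refine Finset.sum_congr rfl fun y _ => ?_
      rw [← Finset.sum_mul, h4 x xh y]
    have hrepr2 : mi (fun p : 𝒳 × (𝒳 × 𝒴) => V (p.2.1, p.1, p.2.2))
        = ∑ c, ∑ x, ∑ y, V (x, c, y) * Real.logb 2 (V (x, c, y) / (A c * s x y)) := by
      rw [mi_repr _ (fun t => hV0 _)]
      have term : ∀ t : 𝒳 × (𝒳 × 𝒴),
          V (t.2.1, t.1, t.2.2) * Real.logb 2 (V (t.2.1, t.1, t.2.2) /
            ((∑ b : 𝒳 × 𝒴, V (b.1, t.1, b.2)) * (∑ a, V (t.2.1, a, t.2.2))))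
          = V (t.2.1, t.1, t.2.2) *
              Real.logb 2 (V (t.2.1, t.1, t.2.2) / (A t.1 * s t.2.1 t.2.2)) := by
        rintro ⟨c, x, y⟩
        dsimp only
        have e1 : (∑ b : 𝒳 × 𝒴, V (b.1, c, b.2)) = A c := by
          rw [Fintype.sum_prod_type]
        have e2 : (∑ a, V (x, a, y)) = s x y := rfl
        rw [e1, e2]
      rw [Finset.sum_congr rfl fun t _ => term t]
      simp only [Fintype.sum_prod_type]
    rw [hrepr1, hrepr2]
    refine Finset.sum_congr rfl fun c _ => Finset.sum_congr rfl fun x _ =>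
      Finset.sum_congr rfl fun y _ => ?_
    rw [mul_comm (A c) (s x y)]
  · rintro r ⟨q, hq0, hq1, h3, h4, rfl⟩
    have hd := dpi (α := 𝒳) (β₁ := 𝒳) (β₂ := 𝒳) (β₃ := 𝒴)
      (fun p => q (p.2.1, p.2.2.1, p.1, p.2.2.2)) (fun t => hq0 _)
    have he : (fun t : 𝒳 × 𝒳 × 𝒴 =>
        ∑ b2, (fun p : 𝒳 × (𝒳 × 𝒳 × 𝒴) => q (p.2.1, p.2.2.1, p.1, p.2.2.2))
          (t.1, t.2.1, b2, t.2.2))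
        = (fun p : 𝒳 × (𝒳 × 𝒴) => V (p.2.1, p.1, p.2.2)) :=
      funext fun t => h4 t.2.1 t.1 t.2.2
    rw [he] at hd
    exact hd
end

section
/- For finite random variables U, X, Y, X̃, X̂, Z with joint distribution V, the minimum of I(X̂ ∧ X Y X̃ Z | U) over all joint distributions V_{U X Y X̃ X̂ Z} whose (U, X, Y, X̂, Z)-marginal equals the given (U, X, Y, X̃, Z)-marginal is exactly I(X̃ ∧ X Y Z | U). -/
open Finset Real

/-- Conditional mutual information `I(A ∧ B | C)` of a joint distribution on
`γ × α × β` whose first coordinate is the conditioning variable. -/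
noncomputable def cmi {γ α β : Type*} [Fintype γ] [Fintype α] [Fintype β]
    (p : γ × α × β → ℝ) : ℝ :=
  ent (fun q : γ × α => ∑ b, p (q.1, q.2, b))
    + ent (fun q : γ × β => ∑ a, p (q.1, a, q.2))
    - ent p
    - ent (fun c : γ => ∑ a, ∑ b, p (c, a, b))

lemma log2_pos : (0:ℝ) < Real.log 2 := Real.log_pos one_lt_two

lemma pt_gibbs (p a c m : ℝ) (hp : 0 ≤ p) (ha : 0 ≤ a) (hc : 0 ≤ c) (hm : 0 ≤ m)
    (hpa : p ≤ a) (hpc : p ≤ c) (ham : a ≤ m) :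
    (p - a * c / m) / Real.log 2
      ≤ p * (Real.logb 2 p + Real.logb 2 m - Real.logb 2 a - Real.logb 2 c) := by
  rcases eq_or_lt_of_le hp with h0 | h0
  · have : (0 - a * c / m) / Real.log 2 ≤ 0 := by
      apply div_nonpos_of_nonpos_of_nonneg
      · simp only [zero_sub, neg_nonpos]; positivity
      · exact le_of_lt log2_pos
    simpa [← h0] using this
  · have ha' : 0 < a := lt_of_lt_of_le h0 hpa
    have hc' : 0 < c := lt_of_lt_of_le h0 hpc
    have hm' : 0 < m := lt_of_lt_of_le ha' ham
    set r := a * c / m with hr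
    have hr' : 0 < r := by positivity
    have hlog : Real.log (r / p) ≤ r / p - 1 := Real.log_le_sub_one_of_pos (by positivity)
    have h1 : Real.log r - Real.log p ≤ r / p - 1 := by
      rwa [Real.log_div (ne_of_gt hr') (ne_of_gt h0)] at hlog
    have h2 : p * (Real.log r - Real.log p) ≤ r - p := by
      have := mul_le_mul_of_nonneg_left h1 hp
      calc p * (Real.log r - Real.log p) ≤ p * (r / p - 1) := this
        _ = r - p := by field_simp
    have hlogb : Real.logb 2 p + Real.logb 2 m - Real.logb 2 a - Real.logb 2 c
        = (Real.log p - Real.log r) / Real.log 2 := by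
      simp only [Real.logb, hr, Real.log_div (by positivity : a * c ≠ 0) (ne_of_gt hm'),
        Real.log_mul (ne_of_gt ha') (ne_of_gt hc')]
      ring
    rw [hlogb, ← mul_div_assoc, div_le_div_iff_of_pos_right log2_pos]
    nlinarith [h2]

lemma pt_prod (a b m : ℝ) (ha : 0 ≤ a) (hb : 0 ≤ b) (ham : a ≤ m) :
    (a * b / m) * Real.logb 2 (a * b / m)
      = (a * b / m) * (Real.logb 2 a + Real.logb 2 b - Real.logb 2 m) := by
  rcases eq_or_lt_of_le ha with h0 | h0
  · simp [← h0]
  · rcases eq_or_lt_of_le hb with h1 | h1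
    · simp [← h1]
    · have hm' : 0 < m := lt_of_lt_of_le h0 ham
      rw [Real.logb_div (by positivity) (ne_of_gt hm'),
        Real.logb_mul (ne_of_gt h0) (ne_of_gt h1)]

lemma sum_rot {A B C : Type*} [Fintype A] [Fintype B] [Fintype C] (h : A → B → C → ℝ) :
    ∑ b, ∑ c, ∑ a, h a b c = ∑ a, ∑ b, ∑ c, h a b c := by
  calc ∑ b, ∑ c, ∑ a, h a b c
      = ∑ b, ∑ a, ∑ c, h a b c := Finset.sum_congr rfl fun b _ => Finset.sum_comm
    _ = ∑ a, ∑ b, ∑ c, h a b c := Finset.sum_comm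

lemma ent_equiv {α β : Type*} [Fintype α] [Fintype β] (e : β ≃ α) (p : α → ℝ) :
    ent (fun b => p (e b)) = ent p := by
  unfold ent
  rw [← Equiv.sum_comp e (fun a => p a * Real.logb 2 (p a))]

lemma cmi_reindex {U A B B' : Type*} [Fintype U] [Fintype A] [Fintype B] [Fintype B']
    (e : B' ≃ B) (p : U × A × B → ℝ) :
    cmi (fun t : U × A × B' => p (t.1, t.2.1, e t.2.2)) = cmi p := by
  unfold cmi
  have h1 : (fun q : U × A => ∑ b : B', p (q.1, q.2, e b))
      = fun q : U × A => ∑ b : B, p (q.1, q.2, b) := by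
    funext q; exact Equiv.sum_comp e (fun b => p (q.1, q.2, b))
  have h2 : ent (fun q : U × B' => ∑ a, p (q.1, a, e q.2))
      = ent (fun q : U × B => ∑ a, p (q.1, a, q.2)) := by
    rw [← ent_equiv ((Equiv.refl U).prodCongr e) (fun q : U × B => ∑ a, p (q.1, a, q.2))]
    congr 1
  have h3 : ent (fun t : U × A × B' => p (t.1, t.2.1, e t.2.2)) = ent p := by
    rw [← ent_equiv ((Equiv.refl U).prodCongr ((Equiv.refl A).prodCongr e)) p]
    congr 1
  have h4 : (fun c : U => ∑ a : A, ∑ b : B', p (c, a, e b))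
      = fun c : U => ∑ a : A, ∑ b : B, p (c, a, b) := by
    funext c; exact Finset.sum_congr rfl fun a _ => Equiv.sum_comp e (fun b => p (c, a, b))
  rw [h1, h2, h3, h4]

lemma cmi_marg_le {U A B C : Type*} [Fintype U] [Fintype A] [Fintype B] [Fintype C]
    (f : U × A × B × C → ℝ) (g : U × A × B → ℝ) (hf : ∀ t, 0 ≤ f t)
    (hgf : ∀ u a b, g (u, a, b) = ∑ c, f (u, a, b, c)) :
    cmi g ≤ cmi f := by
  classical
  set M : U × B → ℝ := fun s => ∑ a, ∑ c, f (s.1, a, s.2, c) with hM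
  set K : U × (B × C) → ℝ := fun s => ∑ a, f (s.1, a, s.2) with hK
  have hg0 : ∀ u a b, 0 ≤ g (u, a, b) := fun u a b => by
    rw [hgf]; exact Finset.sum_nonneg fun c _ => hf _
  have hK0 : ∀ u b c, 0 ≤ K (u, (b, c)) := fun u b c =>
    Finset.sum_nonneg fun a _ => hf _
  have hM0 : ∀ u b, 0 ≤ M (u, b) := fun u b =>
    Finset.sum_nonneg fun a _ => Finset.sum_nonneg fun c _ => hf _
  have hfg : ∀ u a b c, f (u, a, b, c) ≤ g (u, a, b) := fun u a b c => by
    rw [hgf]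
    exact Finset.single_le_sum (f := fun c => f (u, a, b, c)) (fun c _ => hf _)
      (Finset.mem_univ c)
  have hfK : ∀ u a b c, f (u, a, b, c) ≤ K (u, (b, c)) :=
    fun u a b c => Finset.single_le_sum (f := fun a => f (u, a, b, c))
      (fun a _ => hf (u, a, b, c)) (Finset.mem_univ a)
  have hgM : ∀ u a b, g (u, a, b) ≤ M (u, b) := fun u a b => by
    rw [hgf]
    exact Finset.single_le_sum
      (f := fun a => ∑ c, f (u, a, b, c))
      (fun a _ => Finset.sum_nonneg fun c _ => hf _) (Finset.mem_univ a)
  have hKM : ∀ u b, ∑ c, K (u, (b, c)) = M (u, b) := fun u b => by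
    simp only [hK, hM]; exact Finset.sum_comm
  have hMg : ∀ u b, ∑ a, g (u, a, b) = M (u, b) := fun u b => by
    simp only [hM]
    exact Finset.sum_congr rfl fun a _ => hgf u a b
  have E1 : ent f
      = -∑ u, ∑ a, ∑ b, ∑ c, f (u, a, b, c) * Real.logb 2 (f (u, a, b, c)) := by
    unfold ent
    simp only [Fintype.sum_prod_type]
  have E2 : ent g
      = -∑ u, ∑ a, ∑ b, ∑ c, f (u, a, b, c) * Real.logb 2 (g (u, a, b)) := by
    unfold ent
    simp only [Fintype.sum_prod_type]
    congr 1
    refine Finset.sum_congr rfl fun u _ => Finset.sum_congr rfl fun a _ =>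
      Finset.sum_congr rfl fun b _ => ?_
    rw [hgf u a b, Finset.sum_mul]
  have E3 : ent K
      = -∑ u, ∑ a, ∑ b, ∑ c, f (u, a, b, c) * Real.logb 2 (K (u, (b, c))) := by
    unfold ent
    simp only [Fintype.sum_prod_type]
    congr 1
    refine Finset.sum_congr rfl fun u _ => ?_
    rw [← sum_rot (fun a b c => f (u, a, b, c) * Real.logb 2 (K (u, (b, c))))]
    refine Finset.sum_congr rfl fun b _ => Finset.sum_congr rfl fun c _ => ?_
    rw [show K (u, (b, c)) * Real.logb 2 (K (u, (b, c)))
        = (∑ a, f (u, a, b, c)) * Real.logb 2 (K (u, (b, c))) from by rw [hK],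
      Finset.sum_mul]
  have E4 : ent M
      = -∑ u, ∑ a, ∑ b, ∑ c, f (u, a, b, c) * Real.logb 2 (M (u, b)) := by
    unfold ent
    simp only [Fintype.sum_prod_type]
    congr 1
    refine Finset.sum_congr rfl fun u _ => ?_
    calc ∑ b, M (u, b) * Real.logb 2 (M (u, b))
        = ∑ b, ∑ a, ∑ c, f (u, a, b, c) * Real.logb 2 (M (u, b)) := by
          refine Finset.sum_congr rfl fun b _ => ?_
          rw [show M (u, b) * Real.logb 2 (M (u, b))
              = (∑ a, ∑ c, f (u, a, b, c)) * Real.logb 2 (M (u, b)) from by rw [hM],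
            Finset.sum_mul]
          exact Finset.sum_congr rfl fun a _ => Finset.sum_mul _ _ _
      _ = ∑ a, ∑ b, ∑ c, f (u, a, b, c) * Real.logb 2 (M (u, b)) := Finset.sum_comm
  have hsum : ∑ u, ∑ a, ∑ b, ∑ c, g (u, a, b) * K (u, (b, c)) / M (u, b)
      = ∑ u, ∑ a, ∑ b, ∑ c, f (u, a, b, c) := by
    refine Finset.sum_congr rfl fun u _ => ?_
    calc ∑ a, ∑ b, ∑ c, g (u, a, b) * K (u, (b, c)) / M (u, b)
        = ∑ b, ∑ a, ∑ c, g (u, a, b) * K (u, (b, c)) / M (u, b) := Finset.sum_comm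
      _ = ∑ b, ∑ a, ∑ c, f (u, a, b, c) := ?_
      _ = ∑ a, ∑ b, ∑ c, f (u, a, b, c) := Finset.sum_comm
    refine Finset.sum_congr rfl fun b _ => ?_
    by_cases hM0' : M (u, b) = 0
    · have hz : ∀ a, g (u, a, b) = 0 := by
        have := (Finset.sum_eq_zero_iff_of_nonneg
          (fun a _ => hg0 u a b)).mp (by rw [hMg u b]; exact hM0')
        exact fun a => this a (Finset.mem_univ a)
      have hfz : ∀ a c, f (u, a, b, c) = 0 := by
        intro a c
        have h1 : ∑ c, f (u, a, b, c) = 0 := by rw [← hgf u a b]; exact hz a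
        exact (Finset.sum_eq_zero_iff_of_nonneg (fun c _ => hf _)).mp h1 c (Finset.mem_univ c)
      simp [hz, hfz]
    · have step : ∀ a, ∑ c, g (u, a, b) * K (u, (b, c)) / M (u, b) = g (u, a, b) := by
        intro a
        rw [← Finset.sum_div, ← Finset.mul_sum, hKM u b,
          mul_div_assoc, div_self hM0', mul_one]
      calc ∑ a, ∑ c, g (u, a, b) * K (u, (b, c)) / M (u, b)
          = ∑ a, g (u, a, b) := Finset.sum_congr rfl fun a _ => step a
        _ = M (u, b) := hMg u b
        _ = ∑ a, ∑ c, f (u, a, b, c) := rfl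
  have hmain : 0 ≤ ∑ u, ∑ a, ∑ b, ∑ c, f (u, a, b, c) *
      (Real.logb 2 (f (u, a, b, c)) + Real.logb 2 (M (u, b))
        - Real.logb 2 (g (u, a, b)) - Real.logb 2 (K (u, (b, c)))) := by
    have hz : ∑ u, ∑ a, ∑ b, ∑ c,
        (f (u, a, b, c) - g (u, a, b) * K (u, (b, c)) / M (u, b)) / Real.log 2 = 0 := by
      simp only [← Finset.sum_div]
      simp only [Finset.sum_sub_distrib]
      rw [hsum, sub_self, zero_div]
    rw [← hz]
    refine Finset.sum_le_sum fun u _ => Finset.sum_le_sum fun a _ =>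
      Finset.sum_le_sum fun b _ => Finset.sum_le_sum fun c _ => ?_
    exact pt_gibbs _ _ _ _ (hf _) (hg0 u a b) (hK0 u b c) (hM0 u b)
      (hfg u a b c) (hfK u a b c) (hgM u a b)
  have hsplit : ∑ u, ∑ a, ∑ b, ∑ c, f (u, a, b, c) *
      (Real.logb 2 (f (u, a, b, c)) + Real.logb 2 (M (u, b))
        - Real.logb 2 (g (u, a, b)) - Real.logb 2 (K (u, (b, c))))
      = (∑ u, ∑ a, ∑ b, ∑ c, f (u, a, b, c) * Real.logb 2 (f (u, a, b, c)))
        + (∑ u, ∑ a, ∑ b, ∑ c, f (u, a, b, c) * Real.logb 2 (M (u, b)))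
        - (∑ u, ∑ a, ∑ b, ∑ c, f (u, a, b, c) * Real.logb 2 (g (u, a, b)))
        - (∑ u, ∑ a, ∑ b, ∑ c, f (u, a, b, c) * Real.logb 2 (K (u, (b, c)))) := by
    simp only [mul_add, mul_sub, Finset.sum_add_distrib, Finset.sum_sub_distrib]
  have hgCA : (fun q : U × A => ∑ b, g (q.1, q.2, b))
      = fun q : U × A => ∑ b : B × C, f (q.1, q.2, b) := by
    funext q
    rw [Fintype.sum_prod_type]
    exact Finset.sum_congr rfl fun b _ => hgf q.1 q.2 b
  have hgC : (fun c : U => ∑ a, ∑ b, g (c, a, b))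
      = fun c : U => ∑ a : A, ∑ b : B × C, f (c, a, b) := by
    funext u
    refine Finset.sum_congr rfl fun a _ => ?_
    rw [Fintype.sum_prod_type]
    exact Finset.sum_congr rfl fun b _ => hgf u a b
  have hgCB : (fun q : U × B => ∑ a, g (q.1, a, q.2)) = M := by
    funext q
    simp only [hM]
    exact Finset.sum_congr rfl fun a _ => hgf q.1 a q.2
  have hfCB : (fun q : U × (B × C) => ∑ a, f (q.1, a, q.2)) = K := rfl
  unfold cmi
  rw [hgCA, hgC, hgCB, hfCB]
  have hcomb := hsplit ▸ hmain
  linarith [E1, E2, E3, E4, hcomb]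

lemma cmi_star {U A B : Type*} [Fintype U] [Fintype A] [Fintype B]
    (V : U × A × B → ℝ) (Q : U × A × B × A → ℝ) (hV : ∀ t, 0 ≤ V t)
    (hQdef : ∀ u a b a', Q (u, a, (b, a'))
      = V (u, a', b) * V (u, a, b) / ∑ x, V (u, x, b)) :
    cmi Q = cmi V := by
  classical
  set m : U × B → ℝ := fun s => ∑ x, V (s.1, x, s.2) with hm
  have hQ : ∀ u a b a', Q (u, a, (b, a'))
      = V (u, a', b) * V (u, a, b) / m (u, b) := hQdef
  have hVm : ∀ u a b, V (u, a, b) ≤ m (u, b) := fun u a b =>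
    Finset.single_le_sum (f := fun x => V (u, x, b)) (fun x _ => hV _) (Finset.mem_univ a)
  have M1 : ∀ u a b, ∑ a', Q (u, a, (b, a')) = V (u, a, b) := by
    intro u a b
    simp only [hQ]
    rw [← Finset.sum_div, ← Finset.sum_mul]
    by_cases h0 : m (u, b) = 0
    · have hz : V (u, a, b) = 0 := le_antisymm (h0 ▸ hVm u a b) (hV _)
      rw [h0, div_zero, hz]
    · rw [show (∑ a' : A, V (u, a', b)) = m (u, b) from rfl, mul_comm,
        mul_div_assoc, div_self h0, mul_one]
  have M2 : ∀ u b a', ∑ a, Q (u, a, (b, a')) = V (u, a', b) := by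
    intro u b a'
    simp only [hQ]
    rw [← Finset.sum_div, ← Finset.mul_sum]
    by_cases h0 : m (u, b) = 0
    · have hz : V (u, a', b) = 0 := le_antisymm (h0 ▸ hVm u a' b) (hV _)
      rw [h0, div_zero, hz]
    · rw [show (∑ a : A, V (u, a, b)) = m (u, b) from rfl,
        mul_div_assoc, div_self h0, mul_one]
  have M3 : ∀ u b, ∑ a, ∑ a', Q (u, a, (b, a')) = m (u, b) := by
    intro u b
    rw [hm]
    exact Finset.sum_congr rfl fun a _ => M1 u a b
  have EV : ent V = -∑ u, ∑ a, ∑ b, V (u, a, b) * Real.logb 2 (V (u, a, b)) := by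
    unfold ent; simp only [Fintype.sum_prod_type]
  have Em : ent m = -∑ u, ∑ b, m (u, b) * Real.logb 2 (m (u, b)) := by
    unfold ent; simp only [Fintype.sum_prod_type]
  have EQ : ent Q = -∑ u, ∑ a, ∑ b, ∑ a',
      Q (u, a, (b, a')) * Real.logb 2 (Q (u, a, (b, a'))) := by
    unfold ent; simp only [Fintype.sum_prod_type]
  have hpoint : ∀ u a b a', Q (u, a, (b, a')) * Real.logb 2 (Q (u, a, (b, a')))
      = Q (u, a, (b, a')) * (Real.logb 2 (V (u, a', b)) + Real.logb 2 (V (u, a, b))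
        - Real.logb 2 (m (u, b))) := by
    intro u a b a'
    simp only [hQ]
    exact pt_prod _ _ _ (hV _) (hV _) (hVm u a' b)
  have T2 : ∑ u, ∑ a, ∑ b, ∑ a', Q (u, a, (b, a')) * Real.logb 2 (V (u, a, b))
      = ∑ u, ∑ a, ∑ b, V (u, a, b) * Real.logb 2 (V (u, a, b)) := by
    refine Finset.sum_congr rfl fun u _ => Finset.sum_congr rfl fun a _ =>
      Finset.sum_congr rfl fun b _ => ?_
    rw [← Finset.sum_mul, M1 u a b]
  have T1 : ∑ u, ∑ a, ∑ b, ∑ a', Q (u, a, (b, a')) * Real.logb 2 (V (u, a', b))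
      = ∑ u, ∑ a, ∑ b, V (u, a, b) * Real.logb 2 (V (u, a, b)) := by
    refine Finset.sum_congr rfl fun u _ => ?_
    calc ∑ a, ∑ b, ∑ a', Q (u, a, (b, a')) * Real.logb 2 (V (u, a', b))
        = ∑ b, ∑ a', ∑ a, Q (u, a, (b, a')) * Real.logb 2 (V (u, a', b)) :=
          (sum_rot _).symm
      _ = ∑ b, ∑ a', V (u, a', b) * Real.logb 2 (V (u, a', b)) := by
          refine Finset.sum_congr rfl fun b _ => Finset.sum_congr rfl fun a' _ => ?_
          rw [← Finset.sum_mul, M2 u b a']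
      _ = ∑ a, ∑ b, V (u, a, b) * Real.logb 2 (V (u, a, b)) := Finset.sum_comm
  have T3 : ∑ u, ∑ a, ∑ b, ∑ a', Q (u, a, (b, a')) * Real.logb 2 (m (u, b))
      = ∑ u, ∑ b, m (u, b) * Real.logb 2 (m (u, b)) := by
    refine Finset.sum_congr rfl fun u _ => ?_
    calc ∑ a, ∑ b, ∑ a', Q (u, a, (b, a')) * Real.logb 2 (m (u, b))
        = ∑ b, ∑ a, ∑ a', Q (u, a, (b, a')) * Real.logb 2 (m (u, b)) := Finset.sum_comm
      _ = ∑ b, m (u, b) * Real.logb 2 (m (u, b)) := by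
          refine Finset.sum_congr rfl fun b _ => ?_
          rw [show (∑ a, ∑ a', Q (u, a, (b, a')) * Real.logb 2 (m (u, b)))
              = (∑ a, ∑ a', Q (u, a, (b, a'))) * Real.logb 2 (m (u, b)) from by
            rw [Finset.sum_mul]
            exact Finset.sum_congr rfl fun a _ => (Finset.sum_mul _ _ _).symm, M3 u b]
  have EQ2 : ent Q = ent V + ent V - ent m := by
    rw [EQ, EV, Em]
    have : ∑ u, ∑ a, ∑ b, ∑ a', Q (u, a, (b, a')) * Real.logb 2 (Q (u, a, (b, a')))
        = (∑ u, ∑ a, ∑ b, ∑ a', Q (u, a, (b, a')) * Real.logb 2 (V (u, a', b)))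
          + (∑ u, ∑ a, ∑ b, ∑ a', Q (u, a, (b, a')) * Real.logb 2 (V (u, a, b)))
          - (∑ u, ∑ a, ∑ b, ∑ a', Q (u, a, (b, a')) * Real.logb 2 (m (u, b))) := by
      simp only [hpoint, mul_add, mul_sub, Finset.sum_add_distrib, Finset.sum_sub_distrib]
    rw [this, T1, T2, T3]
    ring
  have hQCA : (fun q : U × A => ∑ b : B × A, Q (q.1, q.2, b))
      = fun q : U × A => ∑ b : B, V (q.1, q.2, b) := by
    funext q
    rw [Fintype.sum_prod_type]
    exact Finset.sum_congr rfl fun b _ => M1 q.1 q.2 b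
  have hQC : (fun c : U => ∑ a, ∑ b : B × A, Q (c, a, b))
      = fun c : U => ∑ a : A, ∑ b : B, V (c, a, b) := by
    funext u
    refine Finset.sum_congr rfl fun a _ => ?_
    rw [Fintype.sum_prod_type]
    exact Finset.sum_congr rfl fun b _ => M1 u a b
  have hQCB : ent (fun s : U × (B × A) => ∑ a, Q (s.1, a, s.2)) = ent V := by
    have h1 : (fun s : U × (B × A) => ∑ a, Q (s.1, a, s.2))
        = fun s : U × (B × A) => V (s.1, s.2.2, s.2.1) := by
      funext s
      exact M2 s.1 s.2.1 s.2.2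
    rw [h1, ← ent_equiv ((Equiv.refl U).prodCongr (Equiv.prodComm B A)) V]
    congr 1
  have hmCB : (fun s : U × B => ∑ a, V (s.1, a, s.2)) = m := rfl
  unfold cmi
  rw [hQCA, hQC, hQCB, hmCB, EQ2]
  ring

/-- The minimum of `I(X̂ ∧ X Y X̃ Z | U)` over all joint distributions `q` of
`(U, X, Y, X̃, X̂, Z)` whose `(U, X, Y, X̂, Z)`-marginal and `(U, X, Y, X̃, Z)`-marginal
both equal the given distribution `V = V_{U X Y X̃ Z}` is exactly `I_V(X̃ ∧ X Y Z | U)`. -/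
theorem min_cmi_over_extensions {𝒰 𝒳 𝒴 𝒵 : Type}
    [Fintype 𝒰] [Fintype 𝒳] [Fintype 𝒴] [Fintype 𝒵]
    (V : 𝒰 × 𝒳 × 𝒴 × 𝒳 × 𝒵 → ℝ)   -- coordinates (U, X, Y, X̃, Z)
    (hV0 : ∀ t, 0 ≤ V t) (hV1 : ∑ t, V t = 1) :
    IsLeast
      { r : ℝ | ∃ q : 𝒰 × 𝒳 × 𝒴 × 𝒳 × 𝒳 × 𝒵 → ℝ,   -- (U, X, Y, X̃, X̂, Z)
          (∀ t, 0 ≤ q t) ∧ (∑ t, q t = 1) ∧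
          (∀ u x y xh z, ∑ xt, q (u, x, y, xt, xh, z) = V (u, x, y, xh, z)) ∧
          (∀ u x y xt z, ∑ xh, q (u, x, y, xt, xh, z) = V (u, x, y, xt, z)) ∧
          r = cmi (fun p : 𝒰 × 𝒳 × (𝒳 × 𝒴 × 𝒳 × 𝒵) =>
                q (p.1, p.2.2.1, p.2.2.2.1, p.2.2.2.2.1, p.2.1, p.2.2.2.2.2)) }
      (cmi (fun p : 𝒰 × 𝒳 × (𝒳 × 𝒴 × 𝒵) =>
        V (p.1, p.2.2.1, p.2.2.2.1, p.2.1, p.2.2.2.2))) := by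
  classical
  -- the shuffling equivalence
  let e : ((𝒳 × 𝒴 × 𝒵) × 𝒳) ≃ (𝒳 × 𝒴 × 𝒳 × 𝒵) :=
    ⟨fun b => (b.1.1, b.1.2.1, b.2, b.1.2.2), fun b => ((b.1, b.2.1, b.2.2.2), b.2.2.1),
      fun _ => rfl, fun _ => rfl⟩
  constructor
  · -- membership: the conditionally independent coupling
    set q : 𝒰 × 𝒳 × 𝒴 × 𝒳 × 𝒳 × 𝒵 → ℝ := fun t =>
      V (t.1, t.2.1, t.2.2.1, t.2.2.2.1, t.2.2.2.2.2)
        * V (t.1, t.2.1, t.2.2.1, t.2.2.2.2.1, t.2.2.2.2.2)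
        / ∑ w, V (t.1, t.2.1, t.2.2.1, w, t.2.2.2.2.2) with hqdef
    have hq0 : ∀ t, 0 ≤ q t := fun t =>
      div_nonneg (mul_nonneg (hV0 _) (hV0 _)) (Finset.sum_nonneg fun w _ => hV0 _)
    have hSz : ∀ u x y z w, (∑ w', V (u, x, y, w', z)) = 0 → V (u, x, y, w, z) = 0 := by
      intro u x y z w h0
      exact (Finset.sum_eq_zero_iff_of_nonneg (fun w' _ => hV0 _)).mp h0 w (Finset.mem_univ w)
    have c3 : ∀ u x y xh z, ∑ xt, q (u, x, y, xt, xh, z) = V (u, x, y, xh, z) := by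
      intro u x y xh z
      show ∑ xt, V (u, x, y, xt, z) * V (u, x, y, xh, z) / ∑ w, V (u, x, y, w, z) = _
      rw [← Finset.sum_div, ← Finset.sum_mul]
      by_cases h0 : (∑ w, V (u, x, y, w, z)) = 0
      · rw [h0, div_zero, hSz u x y z xh h0]
      · rw [mul_comm, mul_div_assoc, div_self h0, mul_one]
    have c4 : ∀ u x y xt z, ∑ xh, q (u, x, y, xt, xh, z) = V (u, x, y, xt, z) := by
      intro u x y xt z
      show ∑ xh, V (u, x, y, xt, z) * V (u, x, y, xh, z) / ∑ w, V (u, x, y, w, z) = _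
      rw [← Finset.sum_div, ← Finset.mul_sum]
      by_cases h0 : (∑ w, V (u, x, y, w, z)) = 0
      · rw [h0, div_zero, hSz u x y z xt h0]
      · rw [mul_div_assoc, div_self h0, mul_one]
    have hq1 : ∑ t, q t = 1 := by
      rw [← hV1]
      simp only [Fintype.sum_prod_type]
      refine Finset.sum_congr rfl fun u _ => Finset.sum_congr rfl fun x _ =>
        Finset.sum_congr rfl fun y _ => Finset.sum_congr rfl fun xt _ => ?_
      rw [Finset.sum_comm]
      exact Finset.sum_congr rfl fun z _ => c4 u x y xt z
    refine ⟨q, hq0, hq1, c3, c4, ?_⟩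
    -- value equality
    have h3 : cmi (fun t : 𝒰 × 𝒳 × ((𝒳 × 𝒴 × 𝒵) × 𝒳) =>
          q (t.1, t.2.2.1.1, t.2.2.1.2.1, t.2.2.2, t.2.1, t.2.2.1.2.2))
        = cmi (fun p : 𝒰 × 𝒳 × (𝒳 × 𝒴 × 𝒵) =>
          V (p.1, p.2.2.1, p.2.2.2.1, p.2.1, p.2.2.2.2)) := by
      refine cmi_star _ _ (fun t => hV0 _) ?_
      intro u a b a'
      rfl
    have h2 := cmi_reindex e (fun p : 𝒰 × 𝒳 × (𝒳 × 𝒴 × 𝒳 × 𝒵) =>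
      q (p.1, p.2.2.1, p.2.2.2.1, p.2.2.2.2.1, p.2.1, p.2.2.2.2.2))
    calc cmi (fun p : 𝒰 × 𝒳 × (𝒳 × 𝒴 × 𝒵) =>
          V (p.1, p.2.2.1, p.2.2.2.1, p.2.1, p.2.2.2.2))
        = cmi (fun t : 𝒰 × 𝒳 × ((𝒳 × 𝒴 × 𝒵) × 𝒳) =>
            q (t.1, t.2.2.1.1, t.2.2.1.2.1, t.2.2.2, t.2.1, t.2.2.1.2.2)) := h3.symm
      _ = cmi (fun p : 𝒰 × 𝒳 × (𝒳 × 𝒴 × 𝒳 × 𝒵) =>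
            q (p.1, p.2.2.1, p.2.2.2.1, p.2.2.2.2.1, p.2.1, p.2.2.2.2.2)) := h2
  · -- lower bound
    rintro r ⟨q, hq0, hq1, hq3, hq4, rfl⟩
    have h5 : cmi (fun p : 𝒰 × 𝒳 × (𝒳 × 𝒴 × 𝒵) =>
          V (p.1, p.2.2.1, p.2.2.2.1, p.2.1, p.2.2.2.2))
        ≤ cmi (fun t : 𝒰 × 𝒳 × ((𝒳 × 𝒴 × 𝒵) × 𝒳) =>
          q (t.1, t.2.2.1.1, t.2.2.1.2.1, t.2.2.2, t.2.1, t.2.2.1.2.2)) := by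
      refine cmi_marg_le _ _ (fun t => hq0 _) ?_
      intro u a b
      exact (hq3 u b.1 b.2.1 a b.2.2).symm
    have h2 := cmi_reindex e (fun p : 𝒰 × 𝒳 × (𝒳 × 𝒴 × 𝒳 × 𝒵) =>
      q (p.1, p.2.2.1, p.2.2.2.1, p.2.2.2.2.1, p.2.1, p.2.2.2.2.2))
    exact le_of_le_of_eq h5 h2
end

section
/- Let V be a joint distribution of (U, X, Y, X̃, Ỹ, Z) on finite alphabets with V_{XU} = V_{X̃U} and V_{YU} = V_{ỸU}, and suppose H_V(X Y | Z U) ≥ H_V(X̃ Ỹ | Z U). Then I_V(X̃ Ỹ ∧ X Y Z | U) + I_V(X̃ ∧ Ỹ | U) ≥ I_V(X Y ∧ Z | U) + I_V(X ∧ Y | U). -/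
open Finset Real

/-!
The gap between the two sides is
`[H(X̃|U) - H(X|U)] + [H(Ỹ|U) - H(Y|U)] + [H(XY|ZU) - H(X̃Ỹ|ZU)] + I(XY ∧ X̃Ỹ | ZU)`.
The first two brackets vanish by the marginal equalities, the third is nonnegative by hypothesis,
and conditional mutual information is nonnegative by `log x ≥ 1 - 1/x`.
-/

lemma ent_mul_log_two {α : Type*} [Fintype α] (p : α → ℝ) :
    ent p * log 2 = -∑ a, p a * log (p a) := by
  have hlog : log 2 ≠ 0 := by positivity
  simp only [ent, logb, neg_mul, sum_mul, mul_div_assoc', div_mul_cancel₀ _ hlog]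

lemma sub_mul_div_le_mul_log {t A B C : ℝ} (ht : 0 ≤ t) (hA : t ≤ A) (hB : t ≤ B) (hC : A ≤ C) :
    t - A * B / C ≤ t * (log t + log C - log A - log B) := by
  rcases ht.eq_or_lt with rfl | ht
  · have hA₀ : 0 ≤ A := hA
    have hB₀ : 0 ≤ B := hB
    have hC₀ : 0 ≤ C := hA₀.trans hC
    simp only [zero_sub, zero_mul, neg_nonpos]
    positivity
  have hA₀ : 0 < A := ht.trans_le hA
  have hB₀ : 0 < B := ht.trans_le hB
  have hC₀ : 0 < C := hA₀.trans_le hC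
  have hlog := one_sub_inv_le_log_of_pos (x := t * C / (A * B)) (by positivity)
  rw [log_div (by positivity) (by positivity), log_mul ht.ne' hC₀.ne', log_mul hA₀.ne' hB₀.ne',
    ← sub_sub, inv_div] at hlog
  calc t - A * B / C = t * (1 - A * B / (t * C)) := by field_simp
    _ ≤ _ := mul_le_mul_of_nonneg_left hlog ht.le

lemma sum_sum_mul_div_eq_of_sum_eq {α β : Type*} [Fintype α] [Fintype β] (f : α → ℝ) (g : β → ℝ)
    (S : ℝ) (hf : ∑ a, f a = S) (hg : ∑ b, g b = S) : ∑ a, ∑ b, f a * g b / S = S := by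
  simp only [← sum_div, ← sum_mul_sum, hf, hg, mul_self_div_self]

section cmi

variable {γ α β : Type*} [Fintype γ] [Fintype α] [Fintype β]

lemma cmi_mul_log_two (p : γ × α × β → ℝ) :
    cmi p * log 2 = ∑ c, ∑ a, ∑ b, p (c, a, b) * (log (p (c, a, b))
      + log (∑ a', ∑ b', p (c, a', b')) - log (∑ b', p (c, a, b')) - log (∑ a', p (c, a', b))) := by
  simp only [cmi, sub_mul, add_mul, ent_mul_log_two, Fintype.sum_prod_type, sum_mul,
    mul_add, mul_sub, sum_add_distrib, sum_sub_distrib]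
  rw [sum_congr rfl fun c _ => sum_comm (s := (univ : Finset β))]
  ring

lemma cmi_nonneg (p : γ × α × β → ℝ) (hp : ∀ t, 0 ≤ p t) : 0 ≤ cmi p := by
  refine nonneg_of_mul_nonneg_left ?_ (log_pos one_lt_two)
  rw [cmi_mul_log_two]
  calc (0 : ℝ) = ∑ c, ∑ a, ∑ b, (p (c, a, b) - (∑ b', p (c, a, b')) * (∑ a', p (c, a', b))
        / ∑ a', ∑ b', p (c, a', b')) := by
        simp only [sum_sub_distrib]
        rw [sum_congr rfl fun c _ => sum_sum_mul_div_eq_of_sum_eq _ _ _ rfl sum_comm]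
        simp
    _ ≤ _ := by
      gcongr with c _ a _ b _
      exact sub_mul_div_le_mul_log (hp _)
        (single_le_sum (f := fun b' => p (c, a, b')) (fun _ _ => hp _) (mem_univ b))
        (single_le_sum (f := fun a' => p (c, a', b)) (fun _ _ => hp _) (mem_univ a))
        (single_le_sum (f := fun a' => ∑ b', p (c, a', b'))
          (fun _ _ => sum_nonneg fun _ _ => hp _) (mem_univ a))

end cmi

section gap

variable {𝒰 𝒳 𝒴 𝒳' 𝒴' 𝒵 : Type*} [Fintype 𝒰] [Fintype 𝒳] [Fintype 𝒴] [Fintype 𝒳'] [Fintype 𝒴']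
  [Fintype 𝒵]

lemma cmi_add_cmi_sub_cmi_add_cmi_eq (V : 𝒰 × 𝒳 × 𝒴 × 𝒳' × 𝒴' × 𝒵 → ℝ) :
    cmi (fun p : 𝒰 × (𝒳' × 𝒴') × (𝒳 × 𝒴 × 𝒵) =>
          V (p.1, p.2.2.1, p.2.2.2.1, p.2.1.1, p.2.1.2, p.2.2.2.2))
      + cmi (fun p : 𝒰 × 𝒳' × 𝒴' => ∑ x, ∑ y, ∑ z, V (p.1, x, y, p.2.1, p.2.2, z))
      - (cmi (fun p : 𝒰 × (𝒳 × 𝒴) × 𝒵 => ∑ xt, ∑ yt, V (p.1, p.2.1.1, p.2.1.2, xt, yt, p.2.2))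
        + cmi (fun p : 𝒰 × 𝒳 × 𝒴 => ∑ xt, ∑ yt, ∑ z, V (p.1, p.2.1, p.2.2, xt, yt, z)))
    = (ent (fun q : 𝒰 × 𝒳' => ∑ x, ∑ y, ∑ yt, ∑ z, V (q.1, x, y, q.2, yt, z))
        - ent (fun q : 𝒰 × 𝒳 => ∑ y, ∑ xt, ∑ yt, ∑ z, V (q.1, q.2, y, xt, yt, z)))
      + (ent (fun q : 𝒰 × 𝒴' => ∑ x, ∑ y, ∑ xt, ∑ z, V (q.1, x, y, xt, q.2, z))
        - ent (fun q : 𝒰 × 𝒴 => ∑ x, ∑ xt, ∑ yt, ∑ z, V (q.1, x, q.2, xt, yt, z)))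
      + (ent (fun p : 𝒰 × 𝒳 × 𝒴 × 𝒵 => ∑ xt, ∑ yt, V (p.1, p.2.1, p.2.2.1, xt, yt, p.2.2.2))
        - ent (fun p : 𝒰 × 𝒳' × 𝒴' × 𝒵 => ∑ x, ∑ y, V (p.1, x, y, p.2.1, p.2.2.1, p.2.2.2)))
      + cmi (fun w : (𝒰 × 𝒵) × (𝒳 × 𝒴) × (𝒳' × 𝒴') =>
          V (w.1.1, w.2.1.1, w.2.1.2, w.2.2.1, w.2.2.2, w.1.2)) := by
  -- Written as coordinatewise sums with `𝒵` innermost and `𝒳'`, `𝒴'` inside `𝒳`, `𝒴`, each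
  -- entropy has a single normal form; keeping `𝒳'`, `𝒴'` apart from `𝒳`, `𝒴` is what lets the
  -- type-directed `sum_comm` rules find it.
  simp only [cmi, ent, Fintype.sum_prod_type, sum_comm (γ := 𝒵),
    sum_comm (γ := 𝒳') (α := 𝒳), sum_comm (γ := 𝒳') (α := 𝒴),
    sum_comm (γ := 𝒴') (α := 𝒳), sum_comm (γ := 𝒴') (α := 𝒴)]
  ring

end gap

theorem equivocation_pair_mi_inequality_general {𝒰 𝒳 𝒴 𝒵 : Type}
    [Fintype 𝒰] [Fintype 𝒳] [Fintype 𝒴] [Fintype 𝒵]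
    (V : 𝒰 × 𝒳 × 𝒴 × 𝒳 × 𝒴 × 𝒵 → ℝ)   -- coordinates (U, X, Y, X̃, Ỹ, Z)
    (hV0 : ∀ t, 0 ≤ V t)
    (hmargX : ∀ u a, (∑ y, ∑ xt, ∑ yt, ∑ z, V (u, a, y, xt, yt, z))
        = ∑ x, ∑ y, ∑ yt, ∑ z, V (u, x, y, a, yt, z))
    (hmargY : ∀ u b, (∑ x, ∑ xt, ∑ yt, ∑ z, V (u, x, b, xt, yt, z))
        = ∑ x, ∑ y, ∑ xt, ∑ z, V (u, x, y, xt, b, z))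
    (hH : ent (fun p : 𝒰 × 𝒳 × 𝒴 × 𝒵 =>
            ∑ x, ∑ y, V (p.1, x, y, p.2.1, p.2.2.1, p.2.2.2))
          - ent (fun p : 𝒰 × 𝒵 =>
              ∑ x, ∑ y, ∑ xt, ∑ yt, V (p.1, x, y, xt, yt, p.2))
        ≤ ent (fun p : 𝒰 × 𝒳 × 𝒴 × 𝒵 =>
            ∑ xt, ∑ yt, V (p.1, p.2.1, p.2.2.1, xt, yt, p.2.2.2))
          - ent (fun p : 𝒰 × 𝒵 =>
              ∑ x, ∑ y, ∑ xt, ∑ yt, V (p.1, x, y, xt, yt, p.2))) :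
    cmi (fun p : 𝒰 × (𝒳 × 𝒴) × 𝒵 =>
        ∑ xt, ∑ yt, V (p.1, p.2.1.1, p.2.1.2, xt, yt, p.2.2))
      + cmi (fun p : 𝒰 × 𝒳 × 𝒴 =>
          ∑ xt, ∑ yt, ∑ z, V (p.1, p.2.1, p.2.2, xt, yt, z))
    ≤ cmi (fun p : 𝒰 × (𝒳 × 𝒴) × (𝒳 × 𝒴 × 𝒵) =>
          V (p.1, p.2.2.1, p.2.2.2.1, p.2.1.1, p.2.1.2, p.2.2.2.2))
      + cmi (fun p : 𝒰 × 𝒳 × 𝒴 =>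
          ∑ x, ∑ y, ∑ z, V (p.1, x, y, p.2.1, p.2.2, z)) := by
  have hX : ent (fun q : 𝒰 × 𝒳 => ∑ y, ∑ xt, ∑ yt, ∑ z, V (q.1, q.2, y, xt, yt, z))
      = ent (fun q : 𝒰 × 𝒳 => ∑ x, ∑ y, ∑ yt, ∑ z, V (q.1, x, y, q.2, yt, z)) :=
    congrArg ent (funext fun q => hmargX q.1 q.2)
  have hY : ent (fun q : 𝒰 × 𝒴 => ∑ x, ∑ xt, ∑ yt, ∑ z, V (q.1, x, q.2, xt, yt, z))
      = ent (fun q : 𝒰 × 𝒴 => ∑ x, ∑ y, ∑ xt, ∑ z, V (q.1, x, y, xt, q.2, z)) :=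
    congrArg ent (funext fun q => hmargY q.1 q.2)
  rw [← sub_nonneg, cmi_add_cmi_sub_cmi_add_cmi_eq, hX, hY, sub_self, sub_self, zero_add, zero_add]
  exact add_nonneg (sub_nonneg.2 ((sub_le_sub_iff_right _).1 hH)) (cmi_nonneg _ fun _ => hV0 _)

/-- Let `V` be a joint distribution of `(U, X, Y, X̃, Ỹ, Z)` with `V_{XU} = V_{X̃U}`,
`V_{YU} = V_{ỸU}`, and `H_V(X Y | Z U) ≥ H_V(X̃ Ỹ | Z U)`.  Then
`I_V(X̃ Ỹ ∧ X Y Z | U) + I_V(X̃ ∧ Ỹ | U) ≥ I_V(X Y ∧ Z | U) + I_V(X ∧ Y | U)`. -/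
theorem equivocation_pair_mi_inequality {𝒰 𝒳 𝒴 𝒵 : Type}
    [Fintype 𝒰] [Fintype 𝒳] [Fintype 𝒴] [Fintype 𝒵]
    (V : 𝒰 × 𝒳 × 𝒴 × 𝒳 × 𝒴 × 𝒵 → ℝ)   -- coordinates (U, X, Y, X̃, Ỹ, Z)
    (hV0 : ∀ t, 0 ≤ V t) (hV1 : ∑ t, V t = 1)
    (hmargX : ∀ u a, (∑ y, ∑ xt, ∑ yt, ∑ z, V (u, a, y, xt, yt, z))
        = ∑ x, ∑ y, ∑ yt, ∑ z, V (u, x, y, a, yt, z))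
    (hmargY : ∀ u b, (∑ x, ∑ xt, ∑ yt, ∑ z, V (u, x, b, xt, yt, z))
        = ∑ x, ∑ y, ∑ xt, ∑ z, V (u, x, y, xt, b, z))
    (hH : ent (fun p : 𝒰 × 𝒳 × 𝒴 × 𝒵 =>
            ∑ x, ∑ y, V (p.1, x, y, p.2.1, p.2.2.1, p.2.2.2))
          - ent (fun p : 𝒰 × 𝒵 =>
              ∑ x, ∑ y, ∑ xt, ∑ yt, V (p.1, x, y, xt, yt, p.2))
        ≤ ent (fun p : 𝒰 × 𝒳 × 𝒴 × 𝒵 =>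
            ∑ xt, ∑ yt, V (p.1, p.2.1, p.2.2.1, xt, yt, p.2.2.2))
          - ent (fun p : 𝒰 × 𝒵 =>
              ∑ x, ∑ y, ∑ xt, ∑ yt, V (p.1, x, y, xt, yt, p.2))) :
    cmi (fun p : 𝒰 × (𝒳 × 𝒴) × 𝒵 =>
        ∑ xt, ∑ yt, V (p.1, p.2.1.1, p.2.1.2, xt, yt, p.2.2))
      + cmi (fun p : 𝒰 × 𝒳 × 𝒴 =>
          ∑ xt, ∑ yt, ∑ z, V (p.1, p.2.1, p.2.2, xt, yt, z))
    ≤ cmi (fun p : 𝒰 × (𝒳 × 𝒴) × (𝒳 × 𝒴 × 𝒵) =>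
          V (p.1, p.2.2.1, p.2.2.2.1, p.2.1.1, p.2.1.2, p.2.2.2.2))
      + cmi (fun p : 𝒰 × 𝒳 × 𝒴 =>
          ∑ x, ∑ y, ∑ z, V (p.1, x, y, p.2.1, p.2.2, z)) :=
  equivocation_pair_mi_inequality_general V hV0 hmargX hmargY hH
end

section
/- Suppose a code C = {x_1, …, x_M} ⊆ 𝒳^n satisfies Σ_{V} π(C, V) · 2^{-n(R − I_V(X∧X̃) + 3δ)} < 1/2, where the sum is over all joint n-types V on 𝒳 × 𝒳 and π(C,V) = (1/M) Σ_i |T_{V_{X̃|X}}(x_i) ∩ C \ {x_i}|. Then there exists a subset C^{ex} ⊆ C with |C^{ex}| ≥ M/2 such that for every x_i ∈ C^{ex} and every joint type V: |T_{V_{X̃|X}}(x_i) ∩ C^{ex}| < 2^{n(R − I_V(X∧X̃) + 3δ)}, and moreover π(C^{ex}, V) ≤ 2^{n(R − I_V(X∧X̃) + 3δ)}. -/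
open Finset

/-- Expurgation: if the type-weighted packing sum of a code `C` is below `1/2`,
then there is a sub-code `C^{ex} ⊆ C` of at least half the size such that every
surviving codeword has small shell intersections with `C^{ex}` for every joint
type, and the packing function of `C^{ex}` obeys the same exponential bound. -/
theorem expurgated_code_exists {F ι : Type} [Fintype F] [DecidableEq F] [Fintype ι]
    (n : ℕ) (R δ : ℝ) (Iv : ι → ℝ)   -- ι indexes the joint n-types V, Iv v = I_V(X∧X̃)
    (C : Finset F) (hC : C.Nonempty)
    (shell : ι → F → Finset F)       -- (V, x) ↦ T_{V_{X̃|X}}(x)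
    (hsum : ∑ v : ι,
        ((1 / (C.card : ℝ)) * ∑ x ∈ C, (((shell v x ∩ C).erase x).card : ℝ))
          * (2 : ℝ) ^ (-(n : ℝ) * (R - Iv v + 3 * δ)) < 1 / 2) :
    ∃ Cex ⊆ C, ((C.card : ℝ) / 2 ≤ (Cex.card : ℝ))
      ∧ (∀ x ∈ Cex, ∀ v : ι,
          (((shell v x ∩ Cex).erase x).card : ℝ)
            < (2 : ℝ) ^ ((n : ℝ) * (R - Iv v + 3 * δ)))
      ∧ (∀ v : ι,
          (1 / (Cex.card : ℝ)) * ∑ x ∈ Cex, (((shell v x ∩ Cex).erase x).card : ℝ)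
            ≤ (2 : ℝ) ^ ((n : ℝ) * (R - Iv v + 3 * δ))) := by
  classical
  set M : ℝ := (C.card : ℝ) with hM
  have hMpos : 0 < M := by
    have h := Finset.card_pos.mpr hC
    rw [hM]; exact_mod_cast h
  set w : ι → ℝ := fun v => (2 : ℝ) ^ (-(n : ℝ) * (R - Iv v + 3 * δ)) with hw
  have hwpos : ∀ v, 0 < w v := fun v => Real.rpow_pos_of_pos (by norm_num : (0:ℝ) < 2) _
  set f : F → ℝ := fun x => ∑ v : ι, (((shell v x ∩ C).erase x).card : ℝ) * w v with hf
  have hfnonneg : ∀ x, 0 ≤ f x := fun x =>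
    Finset.sum_nonneg fun v _ => mul_nonneg (Nat.cast_nonneg _) (hwpos v).le
  have hsum' : ∑ x ∈ C, f x < M / 2 := by
    have h1 : ∑ v : ι,
        ((1 / M) * ∑ x ∈ C, (((shell v x ∩ C).erase x).card : ℝ)) * w v
        = (1 / M) * ∑ x ∈ C, f x := by
      simp only [hf, Finset.mul_sum, Finset.sum_mul]
      rw [Finset.sum_comm]
      exact Finset.sum_congr rfl fun x _ => Finset.sum_congr rfl fun v _ => by ring
    have h2 : (1 / M) * ∑ x ∈ C, f x < 1 / 2 := by
      rw [← h1]; exact hsum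
    calc ∑ x ∈ C, f x = M * ((1 / M) * ∑ x ∈ C, f x) := by field_simp
      _ < M * (1 / 2) := mul_lt_mul_of_pos_left h2 hMpos
      _ = M / 2 := by ring
  set Cex : Finset F := C.filter (fun x => f x < 1) with hCex
  have hsub : Cex ⊆ C := Finset.filter_subset _ _
  set B : Finset F := C.filter (fun x => ¬ f x < 1) with hB
  have hBcard : (B.card : ℝ) ≤ ∑ x ∈ C, f x := by
    calc (B.card : ℝ) = ∑ x ∈ B, (1 : ℝ) := by simp
    _ ≤ ∑ x ∈ B, f x := Finset.sum_le_sum fun x hx => by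
        have := (Finset.mem_filter.mp hx).2; linarith [not_lt.mp this]
    _ ≤ ∑ x ∈ C, f x := Finset.sum_le_sum_of_subset_of_nonneg
        (Finset.filter_subset _ _) (fun x _ _ => hfnonneg x)
  have hsplit : Cex.card + B.card = C.card := by
    rw [hCex, hB]; exact Finset.card_filter_add_card_filter_not _
  have hcard : M / 2 ≤ (Cex.card : ℝ) := by
    have : (Cex.card : ℝ) + (B.card : ℝ) = M := by
      rw [hM, ← hsplit]; push_cast; ring
    linarith
  have hCexpos : (0 : ℝ) < (Cex.card : ℝ) := lt_of_lt_of_le (by linarith) hcard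
  have hkey : ∀ x ∈ Cex, ∀ v : ι,
      (((shell v x ∩ Cex).erase x).card : ℝ)
        < (2 : ℝ) ^ ((n : ℝ) * (R - Iv v + 3 * δ)) := by
    intro x hx v
    have hfx : f x < 1 := (Finset.mem_filter.mp hx).2
    have hterm : (((shell v x ∩ C).erase x).card : ℝ) * w v ≤ f x := by
      exact Finset.single_le_sum (f := fun v => (((shell v x ∩ C).erase x).card : ℝ) * w v)
        (fun v _ => mul_nonneg (Nat.cast_nonneg _) (hwpos v).le) (Finset.mem_univ v)
    have hmono : (((shell v x ∩ Cex).erase x).card : ℝ)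
        ≤ (((shell v x ∩ C).erase x).card : ℝ) := by
      exact_mod_cast Finset.card_le_card
        (Finset.erase_subset_erase _ (Finset.inter_subset_inter (subset_refl _) hsub))
    have hlt : (((shell v x ∩ Cex).erase x).card : ℝ) * w v < 1 :=
      lt_of_le_of_lt (mul_le_mul_of_nonneg_right hmono (hwpos v).le)
        (lt_of_le_of_lt hterm hfx)
    have hinv : w v = ((2 : ℝ) ^ ((n : ℝ) * (R - Iv v + 3 * δ)))⁻¹ := by
      rw [hw, ← Real.rpow_neg (by norm_num : (0:ℝ) ≤ 2)]; ring_nf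
    have hpos2 : 0 < (2 : ℝ) ^ ((n : ℝ) * (R - Iv v + 3 * δ)) :=
      Real.rpow_pos_of_pos (by norm_num) _
    rw [hinv] at hlt
    calc (((shell v x ∩ Cex).erase x).card : ℝ)
        = (((shell v x ∩ Cex).erase x).card : ℝ)
          * ((2 : ℝ) ^ ((n : ℝ) * (R - Iv v + 3 * δ)))⁻¹
          * (2 : ℝ) ^ ((n : ℝ) * (R - Iv v + 3 * δ)) := by
          field_simp
      _ < 1 * (2 : ℝ) ^ ((n : ℝ) * (R - Iv v + 3 * δ)) :=
          mul_lt_mul_of_pos_right hlt hpos2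
      _ = _ := one_mul _
  refine ⟨Cex, hsub, hcard, hkey, ?_⟩
  intro v
  have hpos2 : 0 < (2 : ℝ) ^ ((n : ℝ) * (R - Iv v + 3 * δ)) :=
    Real.rpow_pos_of_pos (by norm_num) _
  have hbound : ∑ x ∈ Cex, (((shell v x ∩ Cex).erase x).card : ℝ)
      ≤ (Cex.card : ℝ) * (2 : ℝ) ^ ((n : ℝ) * (R - Iv v + 3 * δ)) := by
    calc ∑ x ∈ Cex, (((shell v x ∩ Cex).erase x).card : ℝ)
        ≤ ∑ x ∈ Cex, (2 : ℝ) ^ ((n : ℝ) * (R - Iv v + 3 * δ)) := by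
          apply Finset.sum_le_sum
          intro x hx
          exact (hkey x hx v).le
      _ = (Cex.card : ℝ) * _ := by rw [Finset.sum_const, nsmul_eq_mul]
  rw [div_mul_eq_mul_div, one_mul, div_le_iff₀ hCexpos]
  linarith [hbound]
end
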